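/- Let k ≥ 2 and let λ be a partition with λ_1 < k. Identify the conjugate λᶜ with the (k-1)-tuple (λᶜ_1,...,λᶜ_{k-1}) (padding with zeros), and define γ_i ∈ {1,...,k} by γ_i ≡ λᶜ_i - i (mod k). Then the entries γ_1, ..., γ_{k-1} are pairwise distinct if and only if the k-core of λ has at most one part. -/

import Mathlib

open scoped Classical

namespace Petrie

/-- An integer partition, encoded as a weakly decreasing, eventually zero
function `ℕ → ℕ` (0-indexed parts: `parts i` is the `(i+1)`-st part). -/
structure Partition where
  parts : ℕ → ℕ
  antitone : ∀ ⦃i j : ℕ⦄, i ≤ j → parts j ≤ parts i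
  fin_supp : ∃ N, ∀ i, N ≤ i → parts i = 0

/-- The size `|λ|` of a partition. -/
noncomputable def psize (l : Partition) : ℕ := ∑ᶠ i, l.parts i

/-- The number of (nonzero) parts of a partition. -/
noncomputable def length (l : Partition) : ℕ := sInf {i | l.parts i = 0}

/-- The partition whose parts are given by a weakly decreasing list `L`
(of its nonzero entries, possibly padded by zeros). -/
noncomputable def ofList (L : List ℕ) : Partition where
  parts := fun i => (L.drop i).foldr max 0
  antitone := by
    have step : ∀ (M : List ℕ) (i : ℕ),
        (M.drop (i+1)).foldr max 0 ≤ (M.drop i).foldr max 0 := by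
      intro M
      induction M with
      | nil => intro i; simp
      | cons a t ih =>
        intro i
        cases i with
        | zero =>
          simp only [List.drop_succ_cons, List.drop_zero, List.foldr_cons]; exact le_max_right a (t.foldr max 0)
        | succ n => simpa using ih n
    intro i j hij
    induction j, hij using Nat.le_induction with
    | base => exact le_rfl
    | succ n hn ih => exact (step L n).trans ih
  fin_supp := ⟨L.length, by intro i hi; simp [List.drop_eq_nil_of_le hi]⟩

/-- The conjugate (transpose) partition. -/
noncomputable def conj (l : Partition) : Partition where
  parts := fun i => sInf {n | l.parts n ≤ i}
  antitone := by
    intro i j hij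
    obtain ⟨N, hN⟩ := l.fin_supp
    refine csInf_le_csInf (OrderBot.bddBelow _) ⟨N, ?_⟩ ?_
    · simp [hN N le_rfl]
    · intro n hn
      exact le_trans hn hij
  fin_supp := by
    refine ⟨l.parts 0, fun i hi => ?_⟩
    exact Nat.sInf_eq_zero.mpr (Or.inl (le_trans (l.antitone (Nat.zero_le 0)) hi))

/-- The `k`-Petrie number `pet_k(λ) = det[χ(0 ≤ λ_i - i + j < k)]_{i,j=1}^{ℓ(λ)}`. -/
noncomputable def pet (k : ℕ) (l : Partition) : ℤ :=
  Matrix.det (Matrix.of fun i j : Fin (length l) =>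
    if (0:ℤ) ≤ (l.parts i : ℤ) - (i:ℕ) + (j:ℕ) ∧ (l.parts i : ℤ) - (i:ℕ) + (j:ℕ) < k
    then 1 else 0)

/-- The cells of the skew diagram `λ/μ` (rows and columns 0-indexed). -/
def cells (la mu : Partition) : Set (ℕ × ℕ) :=
  {c | mu.parts c.1 ≤ c.2 ∧ c.2 < la.parts c.1}

/-- Rookwise adjacency of two cells. -/
def Adj (c d : ℕ × ℕ) : Prop :=
  (c.1 = d.1 ∧ (c.2 + 1 = d.2 ∨ d.2 + 1 = c.2)) ∨
  (c.2 = d.2 ∧ (c.1 + 1 = d.1 ∨ d.1 + 1 = c.1))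

/-- `λ/μ` is a rim hook (border strip) of size `k`: `μ ⊆ λ`, the skew diagram
has `k` cells, is rookwise connected, and contains no 2×2 square. -/
def IsRimHook (la mu : Partition) (k : ℕ) : Prop :=
  (∀ i, mu.parts i ≤ la.parts i) ∧
  (∑ᶠ i, (la.parts i - mu.parts i)) = k ∧
  (∀ c ∈ cells la mu, ∀ d ∈ cells la mu,
    Relation.ReflTransGen (fun a b => a ∈ cells la mu ∧ b ∈ cells la mu ∧ Adj a b) c d) ∧
  ¬ ∃ i j : ℕ, (i, j) ∈ cells la mu ∧ (i+1, j) ∈ cells la mu ∧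
      (i, j+1) ∈ cells la mu ∧ (i+1, j+1) ∈ cells la mu

/-- The height of a skew shape `λ/μ`: one less than its number of rows. -/
noncomputable def height (la mu : Partition) : ℕ :=
  Set.ncard {i | mu.parts i < la.parts i} - 1

/-- The number of columns of the skew diagram `λ/μ`. -/
noncomputable def cols (la mu : Partition) : ℕ :=
  Set.ncard {j | ∃ i, (i, j) ∈ cells la mu}

/-- `c` is the `k`-core of `λ`: it is obtained from `λ` by successively removing
rim hooks of size `k`, and no further rim hook of size `k` can be removed. -/
def IsCore (k : ℕ) (la c : Partition) : Prop :=
  Relation.ReflTransGen (fun a b => IsRimHook a b k) la c ∧ ∀ b, ¬ IsRimHook c b k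

/-- Dominance order: `Dominates μ λ` means `λ ⊴ μ`. -/
def Dominates (mu la : Partition) : Prop :=
  ∀ r, ∑ i ∈ Finset.range r, la.parts i ≤ ∑ i ∈ Finset.range r, mu.parts i

/-! ### Symmetric functions, realized as formal power series in countably
many variables `x_0, x_1, x_2, …`. -/

/-- The ring of formal power series in the variables `x_i`, `i : ℕ`. -/
abbrev SymFn := MvPowerSeries ℕ ℤ

/-- The total degree of an exponent vector. -/
noncomputable def degree (d : ℕ →₀ ℕ) : ℕ := d.sum fun _ e => e

/-- The complete homogeneous symmetric function `h_m`. -/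
noncomputable def hfun (m : ℕ) : SymFn := fun d => if degree d = m then 1 else 0

/-- `h_n` for an integer index (`0` for negative `n`). -/
noncomputable def hz (n : ℤ) : SymFn := if 0 ≤ n then hfun n.toNat else 0

/-- The elementary symmetric function `e_m`. -/
noncomputable def esymmF (m : ℕ) : SymFn :=
  fun d => if degree d = m ∧ ∀ i, d i ≤ 1 then 1 else 0

/-- The power sum symmetric function `p_n = Σ_i x_i^n`. -/
noncomputable def psumF (n : ℕ) : SymFn :=
  fun d => if ∃ i, d = Finsupp.single i n then 1 else 0

/-- The Petrie symmetric function `G(k,m)`, i.e. the degree-`m` part of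
`Π_i (1 + x_i + x_i^2 + ⋯ + x_i^{k-1})`. -/
noncomputable def G (k m : ℕ) : SymFn :=
  fun d => if degree d = m ∧ ∀ i, d i < k then 1 else 0

/-- The monomial symmetric function `m_λ`. -/
noncomputable def msym (l : Partition) : SymFn :=
  fun d => if Multiset.map (fun i => d i) d.support.val =
      Multiset.map l.parts (Multiset.range (length l)) then 1 else 0

/-- The Schur function `s_λ`, via the Jacobi–Trudi determinant
`s_λ = det[h_{λ_i - i + j}]_{i,j=1}^{ℓ(λ)}`. -/
noncomputable def schur (l : Partition) : SymFn :=
  Matrix.det (Matrix.of fun i j : Fin (length l) =>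
    hz ((l.parts i : ℤ) - (i:ℕ) + (j:ℕ)))

/-- The representative in `{1, …, k}` of `x` modulo `k`. -/
noncomputable def resid (k : ℕ) (x : ℤ) : ℤ := if x % (k:ℤ) = 0 then (k:ℤ) else x % (k:ℤ)

/-- `β_i = λᶜ_i - i` (1-indexed `i`). -/
noncomputable def betaSeq (l : Partition) (i : ℕ) : ℤ := ((conj l).parts (i-1) : ℤ) - (i:ℤ)

/-- `γ_i ∈ {1, …, k}`, `γ_i ≡ λᶜ_i - i (mod k)` (1-indexed `i`). -/
noncomputable def gammaSeq (k : ℕ) (l : Partition) (i : ℕ) : ℤ := resid k (betaSeq l i)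

/-- The number of non-inversions of the sequence `γ_1, …, γ_{k-1}`. -/
noncomputable def ninv (k : ℕ) (g : ℕ → ℤ) : ℕ :=
  (((Finset.Icc 1 (k-1)) ×ˢ (Finset.Icc 1 (k-1))).filter
    (fun p => p.1 < p.2 ∧ g p.1 < g p.2)).card

/-!
Write `μ = λᶜ`, which has at most `k - 1` parts, and read `β_i = μ_i - i` as bead positions on a
`k`-abacus. Removing a `k`-rim hook from `λ` removes one from `μ`, which slides a single bead
`k` positions down; so the multiset of residues of `β_1, …, β_{k-1}` mod `k` is the same for `λ`
and for its `k`-core `c`. If `cᶜ_1 ≤ 1`, the `β_i` of `cᶜ` lie in an interval of length `k - 1`,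
so their residues are distinct. If `cᶜ_1 ≥ 2` and the residues are distinct, the position
`β_1 - k ≥ 1 - k` is free, so a `k`-rim hook starting in the first row of `cᶜ` could still be
removed, contradicting that `c` is a core.
-/

open Relation

theorem Partition.ext {a b : Partition} (h : ∀ i, a.parts i = b.parts i) : a = b := by
  cases a
  cases b
  congr
  exact funext h

theorem mem_cells {a b : Partition} {i j : ℕ} :
    (i, j) ∈ cells a b ↔ b.parts i ≤ j ∧ j < a.parts i :=
  Iff.rfl

section Conjugate

theorem conj_parts_le_iff (l : Partition) (i j : ℕ) :
    (conj l).parts j ≤ i ↔ l.parts i ≤ j := by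
  obtain ⟨N, hN⟩ := l.fin_supp
  have hne : {n | l.parts n ≤ j}.Nonempty := ⟨N, by simp [hN N le_rfl]⟩
  exact ⟨fun h => (l.antitone h).trans (Nat.sInf_mem hne), fun h => Nat.sInf_le h⟩

theorem lt_conj_parts_iff (l : Partition) (i j : ℕ) :
    i < (conj l).parts j ↔ j < l.parts i := by
  simpa only [not_le] using (conj_parts_le_iff l i j).not

theorem conj_conj (l : Partition) : conj (conj l) = l :=
  Partition.ext fun j => eq_of_forall_lt_iff fun i => by
    rw [lt_conj_parts_iff, lt_conj_parts_iff]

theorem conj_parts_mono {a b : Partition} (h : ∀ i, b.parts i ≤ a.parts i) (j : ℕ) :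
    (conj b).parts j ≤ (conj a).parts j := by
  rw [conj_parts_le_iff]
  exact (h _).trans ((conj_parts_le_iff a _ j).1 le_rfl)

theorem conj_parts_eq_zero {l : Partition} {j : ℕ} (h : l.parts 0 ≤ j) :
    (conj l).parts j = 0 :=
  Nat.le_zero.1 ((conj_parts_le_iff l 0 j).2 h)

theorem length_eq_conj_parts_zero (l : Partition) : length l = (conj l).parts 0 := by
  simp [length, conj]

theorem mem_cells_conj {a b : Partition} (p : ℕ × ℕ) :
    p ∈ cells (conj a) (conj b) ↔ p.swap ∈ cells a b := by
  obtain ⟨i, j⟩ := p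
  rw [Prod.swap_prod_mk, mem_cells, mem_cells, conj_parts_le_iff, lt_conj_parts_iff]

theorem cells_conj (a b : Partition) :
    cells (conj a) (conj b) = Prod.swap '' cells a b := by
  ext p
  rw [Set.image_swap_eq_preimage_swap, Set.mem_preimage, mem_cells_conj]

theorem ncard_cells (a b : Partition) :
    (cells a b).ncard = ∑ᶠ i, (a.parts i - b.parts i) := by
  obtain ⟨N, hN⟩ := a.fin_supp
  have hrow : ∀ i, (a.parts i - b.parts i) ≠ 0 → i < N := fun i hi =>
    by_contra fun hiN => hi (by rw [hN i (not_lt.1 hiN), Nat.zero_sub])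
  have hcells : cells a b =
      ↑((Finset.range N).biUnion fun i => {i} ×ˢ Finset.Ico (b.parts i) (a.parts i)) := by
    ext ⟨i, j⟩
    simp only [mem_cells, Finset.coe_biUnion, Finset.coe_range, Set.mem_Iio, Finset.coe_product,
      Finset.coe_singleton, Finset.coe_Ico, Set.mem_iUnion, Set.mem_prod, Set.mem_singleton_iff,
      Set.mem_Ico, exists_prop]
    exact ⟨fun h => ⟨i, hrow i (by omega), rfl, h⟩, fun ⟨_, _, rfl, h⟩ => h⟩
  rw [hcells, Set.ncard_coe_finset, Finset.card_biUnion, finsum_eq_sum_of_support_subset _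
    (s := Finset.range N) fun i hi => by simpa using hrow i hi]
  · simp
  · intro x _ y _ hxy
    simp only [Function.onFun, Finset.disjoint_left, Finset.mem_product, Finset.mem_singleton]
    exact fun _ hx hy => hxy (hx.1.symm.trans hy.1)

theorem finsum_conj_parts_sub (a b : Partition) :
    ∑ᶠ i, ((conj a).parts i - (conj b).parts i) = ∑ᶠ i, (a.parts i - b.parts i) := by
  rw [← ncard_cells, ← ncard_cells, cells_conj,
    Set.ncard_image_of_injective _ Prod.swap_injective]

/-- `IsRimHook la mu k` asks for connectivity under `AdjIn (cells la mu)`. -/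
def AdjIn (S : Set (ℕ × ℕ)) (c d : ℕ × ℕ) : Prop :=
  c ∈ S ∧ d ∈ S ∧ Adj c d

theorem Adj.symm {c d : ℕ × ℕ} (h : Adj c d) : Adj d c := by
  unfold Adj at h ⊢
  omega

theorem Adj.swap {c d : ℕ × ℕ} (h : Adj c d) : Adj c.swap d.swap := by
  unfold Adj at h ⊢
  simp only [Prod.fst_swap, Prod.snd_swap]
  tauto

theorem reflTransGen_adjIn_symm {S : Set (ℕ × ℕ)} {c d : ℕ × ℕ}
    (h : ReflTransGen (AdjIn S) c d) : ReflTransGen (AdjIn S) d c :=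
  ReflTransGen.mono (fun _ _ ⟨hx, hy, hadj⟩ => ⟨hy, hx, hadj.symm⟩) _ _ (ReflTransGen.swap _ _ h)

theorem isRimHook_conj {a b : Partition} {k : ℕ} (h : IsRimHook a b k) :
    IsRimHook (conj a) (conj b) k := by
  obtain ⟨hle, hsum, hconn, hsq⟩ := h
  refine ⟨conj_parts_mono hle, (finsum_conj_parts_sub a b).trans hsum, fun c hc d hd => ?_, ?_⟩
  · show ReflTransGen (AdjIn (cells (conj a) (conj b))) c d
    have hpath : ReflTransGen (AdjIn (cells a b)) c.swap d.swap :=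
      hconn _ ((mem_cells_conj c).1 hc) _ ((mem_cells_conj d).1 hd)
    simpa [Function.onFun] using ReflTransGen.lift (p := AdjIn (cells (conj a) (conj b))) Prod.swap
      (fun x y ⟨hx, hy, hadj⟩ => ⟨(mem_cells_conj _).2 (by simpa using hx),
        (mem_cells_conj _).2 (by simpa using hy), hadj.swap⟩) _ _ hpath
  · rintro ⟨i, j, h₀₀, h₁₀, h₀₁, h₁₁⟩
    exact hsq ⟨j, i, (mem_cells_conj _).1 h₀₀, (mem_cells_conj _).1 h₀₁,
      (mem_cells_conj _).1 h₁₀, (mem_cells_conj _).1 h₁₁⟩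

end Conjugate

section RowDescription

/-- Removing a rim hook that occupies rows `r, …, s` (0-indexed): each of the rows `r, …, s - 1`
is cut back to one cell less than the row below it, and row `s` loses the remaining cells. -/
structure IsRimHookRows (a b : Partition) (k r s : ℕ) : Prop where
  rows_le : r ≤ s
  parts_eq : ∀ i, i < r ∨ s < i → b.parts i = a.parts i
  parts_add_one : ∀ i, r ≤ i → i < s → b.parts i + 1 = a.parts (i + 1)
  last_lt : b.parts s < a.parts s
  last_add : b.parts s + k = a.parts r + (s - r)

theorem sum_Icc_sub_add_eq (f g : ℕ → ℕ) {r s : ℕ} (hrs : r ≤ s) (hle : ∀ i, g i ≤ f i)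
    (hstep : ∀ i, r ≤ i → i < s → g i + 1 = f (i + 1)) :
    ∑ i ∈ Finset.Icc r s, (f i - g i) + g s = f r + (s - r) := by
  induction s, hrs using Nat.le_induction with
  | base => simp [Nat.sub_add_cancel (hle r)]
  | succ s hrs ih =>
    rw [Finset.sum_Icc_succ_top (by omega)]
    have := ih fun i h₁ h₂ => hstep i h₁ (by omega)
    have := hstep s hrs (by omega)
    have := hle (s + 1)
    omega

theorem finsum_parts_sub_add_eq {a b : Partition} {r s : ℕ} (hrs : r ≤ s)
    (hle : ∀ i, b.parts i ≤ a.parts i) (heq : ∀ i, i < r ∨ s < i → b.parts i = a.parts i)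
    (hstep : ∀ i, r ≤ i → i < s → b.parts i + 1 = a.parts (i + 1)) :
    ∑ᶠ i, (a.parts i - b.parts i) + b.parts s = a.parts r + (s - r) := by
  rw [finsum_eq_sum_of_support_subset _ (s := Finset.Icc r s) fun i hi => ?_]
  · exact sum_Icc_sub_add_eq _ _ hrs hle hstep
  · simp only [Function.mem_support, Finset.coe_Icc, Set.mem_Icc] at hi ⊢
    by_contra hout
    exact hi (by rw [heq i (by omega), Nat.sub_self])

theorem exists_vertical_step {S : Set (ℕ × ℕ)} {x y : ℕ × ℕ} (h : ReflTransGen (AdjIn S) x y)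
    {i : ℕ} (hx : x.1 ≤ i) (hy : i < y.1) : ∃ j, (i, j) ∈ S ∧ (i + 1, j) ∈ S := by
  induction h with
  | refl => omega
  | @tail p q _ hpq ih =>
    by_cases hp : i < p.1
    · exact ih hp
    obtain ⟨hpS, hqS, hadj⟩ := hpq
    obtain ⟨p₁, p₂⟩ := p
    obtain ⟨q₁, q₂⟩ := q
    simp only [Adj] at hadj hp hy
    obtain ⟨rfl, rfl, rfl⟩ : p₁ = i ∧ q₁ = i + 1 ∧ q₂ = p₂ := by omega
    exact ⟨_, hpS, hqS⟩

/-- Between two rows met by a rim hook, connectivity forces a vertical step from each row to the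
next one, and the absence of `2 × 2` squares forces that step to be the only overlap. -/
theorem IsRimHook.parts_add_one {a b : Partition} {k : ℕ} (h : IsRimHook a b k) {i j m : ℕ}
    (hi : b.parts i < a.parts i) (hj : b.parts j < a.parts j) (him : i ≤ m) (hmj : m < j) :
    b.parts m + 1 = a.parts (m + 1) := by
  obtain ⟨-, -, hconn, hsq⟩ := h
  obtain ⟨x, hx, hx'⟩ := exists_vertical_step
    (hconn (i, b.parts i) ⟨le_rfl, hi⟩ (j, b.parts j) ⟨le_rfl, hj⟩) him hmj
  rw [mem_cells] at hx hx'
  have ha := a.antitone (Nat.le_add_right m 1)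
  have hb := b.antitone (Nat.le_add_right m 1)
  by_contra hne
  exact hsq ⟨m, b.parts m, mem_cells.2 ⟨le_rfl, by omega⟩, mem_cells.2 ⟨hb, by omega⟩,
    mem_cells.2 ⟨by omega, by omega⟩, mem_cells.2 ⟨by omega, by omega⟩⟩

theorem IsRimHook.exists_rows {a b : Partition} {k : ℕ} (hk : 0 < k) (h : IsRimHook a b k) :
    ∃ r s, IsRimHookRows a b k r s := by
  set R := {i | b.parts i < a.parts i}
  obtain ⟨N, hN⟩ := a.fin_supp
  have hbdd : BddAbove R := ⟨N, fun i (hi : b.parts i < a.parts i) =>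
    not_lt.1 fun hiN => by rw [hN i hiN.le] at hi; omega⟩
  have hne : R.Nonempty := by
    by_contra hR
    have hzero : (fun i => a.parts i - b.parts i) = fun _ => 0 :=
      funext fun i => Nat.sub_eq_zero_of_le (not_lt.1 fun hi => hR ⟨i, hi⟩)
    have hsum := h.2.1
    rw [hzero, finsum_zero] at hsum
    omega
  have hr : sInf R ∈ R := Nat.sInf_mem hne
  have hs : sSup R ∈ R := Nat.sSup_mem hne hbdd
  have hout : ∀ i, i < sInf R ∨ sSup R < i → b.parts i = a.parts i := by
    intro i hi
    have hiR : i ∉ R := hi.elim Nat.notMem_of_lt_sInf (notMem_of_csSup_lt · hbdd)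
    exact le_antisymm (h.1 i) (not_lt.1 hiR)
  have hstep : ∀ i, sInf R ≤ i → i < sSup R → b.parts i + 1 = a.parts (i + 1) :=
    fun i h₁ h₂ => h.parts_add_one hr hs h₁ h₂
  have hrs : sInf R ≤ sSup R := Nat.sInf_le hs
  refine ⟨sInf R, sSup R, hrs, hout, hstep, hs, ?_⟩
  have := finsum_parts_sub_add_eq hrs h.1 hout hstep
  rw [h.2.1] at this
  omega

namespace IsRimHookRows

variable {a b : Partition} {k r s : ℕ}

theorem parts_le (h : IsRimHookRows a b k r s) (i : ℕ) : b.parts i ≤ a.parts i := by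
  rcases lt_or_ge i r with hi | hri
  · exact (h.parts_eq i (.inl hi)).le
  rcases lt_trichotomy i s with his | rfl | his
  · have := h.parts_add_one i hri his
    have := a.antitone (Nat.le_add_right i 1)
    omega
  · exact h.last_lt.le
  · exact (h.parts_eq i (.inr his)).le

theorem mem_rows (h : IsRimHookRows a b k r s) {i j : ℕ} (hij : (i, j) ∈ cells a b) :
    r ≤ i ∧ i ≤ s := by
  by_contra hout
  rw [mem_cells, h.parts_eq i (by omega)] at hij
  omega

theorem reflTransGen_row {i j j' : ℕ} (hj : (i, j) ∈ cells a b) (hj' : b.parts i ≤ j')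
    (hle : j' ≤ j) : ReflTransGen (AdjIn (cells a b)) (i, j) (i, j') := by
  obtain ⟨d, rfl⟩ := Nat.exists_eq_add_of_le hle
  induction d with
  | zero => exact .refl
  | succ d ih =>
    rw [mem_cells] at hj
    have hmid : (i, j' + d) ∈ cells a b := mem_cells.2 ⟨by omega, by omega⟩
    exact .head ⟨mem_cells.2 hj, hmid, .inl ⟨rfl, .inr rfl⟩⟩ (ih hmid (by omega))

theorem reflTransGen_last (h : IsRimHookRows a b k r s) {c : ℕ × ℕ} (hc : c ∈ cells a b) :
    ReflTransGen (AdjIn (cells a b)) c (s, b.parts s) := by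
  obtain ⟨i, j⟩ := c
  obtain ⟨hri, his⟩ := h.mem_rows hc
  have hrow := reflTransGen_row hc le_rfl (mem_cells.1 hc).1
  induction hd : s - i generalizing i j with
  | zero =>
    obtain rfl : i = s := by omega
    exact hrow
  | succ d ih =>
    have hstep := h.parts_add_one i hri (by omega)
    have hb := b.antitone (Nat.le_add_right i 1)
    have hbelow : (i + 1, b.parts i) ∈ cells a b := mem_cells.2 ⟨hb, by omega⟩
    have hcorner : (i, b.parts i) ∈ cells a b :=
      mem_cells.2 ⟨le_rfl, by have := a.antitone (Nat.le_add_right i 1); omega⟩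
    exact hrow.trans (.head ⟨hcorner, hbelow, .inr ⟨rfl, .inl rfl⟩⟩
      (ih (i + 1) (b.parts i) hbelow (by omega) (by omega)
        (reflTransGen_row hbelow le_rfl hb) (by omega)))

theorem not_square (h : IsRimHookRows a b k r s) :
    ¬ ∃ i j : ℕ, (i, j) ∈ cells a b ∧ (i + 1, j) ∈ cells a b ∧
      (i, j + 1) ∈ cells a b ∧ (i + 1, j + 1) ∈ cells a b := by
  rintro ⟨i, j, h₀₀, h₁₀, -, h₁₁⟩
  have := h.mem_rows h₀₀
  have := h.mem_rows h₁₀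
  have := h.parts_add_one i (by omega) (by omega)
  rw [mem_cells] at h₀₀ h₁₁
  omega

theorem isRimHook (h : IsRimHookRows a b k r s) : IsRimHook a b k := by
  refine ⟨h.parts_le, ?_, fun c hc d hd => ?_, h.not_square⟩
  · have := finsum_parts_sub_add_eq h.rows_le h.parts_le h.parts_eq h.parts_add_one
    have := h.last_add
    omega
  · exact (h.reflTransGen_last hc).trans (reflTransGen_adjIn_symm (h.reflTransGen_last hd))

end IsRimHookRows

end RowDescription

section Residues

/-- `beta m j = m_{j+1} - (j+1)`: parts are 0-indexed here, so for `m = λᶜ` this is the paper's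
`β_{j+1}`. -/
def beta (m : Partition) (j : ℕ) : ℤ :=
  m.parts j - (j + 1)

def betaResidues (k n : ℕ) (m : Partition) : List (ZMod k) :=
  (List.range n).map fun j => (beta m j : ZMod k)

theorem range_eq_append_range' {r s n : ℕ} (hrs : r ≤ s) (hsn : s < n) :
    List.range n = List.range r ++ (List.range' r (s - r + 1) ++
      List.range' (s + 1) (n - (s + 1))) := by
  rw [List.range_eq_range', List.range_eq_range', List.range'_eq_append_iff]
  refine ⟨r, by omega, rfl, ?_⟩
  rw [eq_comm, List.range'_eq_append_iff]
  exact ⟨s - r + 1, by omega, by simp, by congr 1 <;> omega⟩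

/-- Removing the rim hook moves the bead `beta a r` to `beta a r - k` and re-indexes the beads
`beta a (r + 1), …, beta a s` one step earlier, so the residues mod `k` are only permuted. -/
theorem IsRimHookRows.betaResidues_perm {a b : Partition} {k r s n : ℕ}
    (h : IsRimHookRows a b k r s) (hsn : s < n) :
    (betaResidues k n b).Perm (betaResidues k n a) := by
  have hrs := h.rows_le
  have hout : ∀ j, j < r ∨ s < j → beta b j = beta a j := fun j hj => by
    simp only [beta, h.parts_eq j hj]
  have hshift : ∀ j, r ≤ j → j < s → beta b j = beta a (j + 1) := fun j h₁ h₂ => by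
    have := h.parts_add_one j h₁ h₂
    simp only [beta]
    push_cast
    omega
  have hlast : beta b s = beta a r - k := by
    have := h.last_add
    simp only [beta]
    omega
  have hmid : (List.range' r (s - r + 1)).map (fun j => (beta b j : ZMod k)) =
      (List.range' (r + 1) (s - r)).map (fun j => (beta a j : ZMod k)) ++
        [(beta a r : ZMod k)] := by
    rw [List.range'_1_concat, List.map_append, show r + (s - r) = s by omega]
    simp only [List.map_cons, List.map_nil, hlast, Int.cast_sub, Int.cast_natCast,
      ZMod.natCast_self, sub_zero]
    congr 1
    refine List.ext_getElem (by simp) fun i h₁ _ => ?_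
    rw [List.length_map, List.length_range'] at h₁
    simp only [List.getElem_map, List.getElem_range', hshift (r + 1 * i) (by omega) (by omega)]
    ring_nf
  rw [betaResidues, betaResidues, range_eq_append_range' hrs hsn]
  simp only [List.map_append]
  rw [List.map_congr_left fun j hj => congrArg Int.cast (hout j (.inl (List.mem_range.1 hj))),
    List.map_congr_left fun j hj => congrArg Int.cast
      (hout j (.inr (List.mem_range'_1.1 hj).1)), hmid, List.range'_succ, List.map_cons]
  exact ((List.perm_append_singleton _ _).append_right _).append_left _

theorem parts_le_of_reflTransGen {l c : Partition} {k : ℕ}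
    (h : ReflTransGen (fun a b => IsRimHook a b k) l c) (i : ℕ) : c.parts i ≤ l.parts i := by
  induction h with
  | refl => exact le_rfl
  | tail _ hab ih => exact (hab.1 i).trans ih

theorem IsRimHook.betaResidues_conj_perm {a b : Partition} {k n : ℕ} (hk : 0 < k)
    (h : IsRimHook a b k) (ha : a.parts 0 ≤ n) :
    (betaResidues k n (conj b)).Perm (betaResidues k n (conj a)) := by
  obtain ⟨r, s, hrows⟩ := (isRimHook_conj h).exists_rows hk
  have hsa : s < a.parts 0 := not_le.1 fun hle => by
    have := hrows.last_lt
    rw [conj_parts_eq_zero hle] at this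
    omega
  exact hrows.betaResidues_perm (by omega)

theorem betaResidues_conj_perm_of_reflTransGen {l c : Partition} {k n : ℕ} (hk : 0 < k)
    (h : ReflTransGen (fun a b => IsRimHook a b k) l c) (hl : l.parts 0 ≤ n) :
    (betaResidues k n (conj c)).Perm (betaResidues k n (conj l)) := by
  induction h with
  | refl => exact .refl _
  | tail hlp hpq ih => exact (hpq.betaResidues_conj_perm hk
      ((parts_le_of_reflTransGen hlp 0).trans hl)).trans ih

end Residues

section Cores

theorem nodup_betaResidues_of_parts_zero_le_one {m : Partition} {k n : ℕ} (hm : m.parts 0 ≤ 1)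
    (hn : n < k) : (betaResidues k n m).Nodup := by
  rw [betaResidues, List.nodup_map_iff_inj_on List.nodup_range]
  intro i hi j hj hij
  rw [List.mem_range] at hi hj
  have hdvd := (ZMod.intCast_eq_intCast_iff_dvd_sub _ _ _).1 hij
  have hi1 := (m.antitone (Nat.zero_le i)).trans hm
  have hj1 := (m.antitone (Nat.zero_le j)).trans hm
  rcases le_total i j with hij' | hij'
  all_goals
    have := m.antitone hij'
    have := Int.eq_zero_of_abs_lt_dvd hdvd (abs_lt.2 ⟨by simp only [beta]; omega,
      by simp only [beta]; omega⟩)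
    simp only [beta] at this
    omega

/-- `s` is the last row whose bead `beta m s` lies above the free position `beta m 0 - k`:
the `k`-rim hook starting in the first row ends there. -/
theorem exists_last_row {m : Partition} {k n : ℕ} (hk : 0 < k) (hkn : k < m.parts 0 + n)
    (hvan : ∀ j, n ≤ j → m.parts j = 0) (hne : ∀ j < n, beta m j ≠ beta m 0 - k) :
    ∃ s, m.parts 0 + s < m.parts s + k ∧ m.parts (s + 1) + k ≤ m.parts 0 + s := by
  have hn : 0 < n := Nat.pos_of_ne_zero fun hn => by
    rw [hvan 0 hn.le] at hkn
    omega
  set s := Nat.findGreatest (fun j => beta m 0 - k < beta m j) (n - 1)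
  have hs : beta m 0 - k < beta m s :=
    Nat.findGreatest_spec (P := fun j => beta m 0 - k < beta m j) (Nat.zero_le _) (by simp [hk])
  refine ⟨s, by simp only [beta] at hs; omega, ?_⟩
  rcases lt_or_ge (s + 1) n with hs1 | hs1
  · have hnext := Nat.findGreatest_is_greatest (Nat.lt_add_one s) (by omega : s + 1 ≤ n - 1)
    have := hne (s + 1) hs1
    simp only [beta, not_lt] at hnext this
    push_cast at hnext this
    omega
  · rw [hvan (s + 1) hs1]
    omega

theorem exists_isRimHookRows_zero {m : Partition} {k s : ℕ}
    (hlt : m.parts 0 + s < m.parts s + k) (hle : m.parts (s + 1) + k ≤ m.parts 0 + s) :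
    ∃ b, IsRimHookRows m b k 0 s := by
  let P : ℕ → ℕ := fun i =>
    if i < s then m.parts (i + 1) - 1 else if i = s then m.parts 0 + s - k else m.parts i
  have hP_lt : ∀ i < s, P i = m.parts (i + 1) - 1 := fun i hi => if_pos hi
  have hP_eq : P s = m.parts 0 + s - k := by simp [P]
  have hP_gt : ∀ i, s < i → P i = m.parts i := fun i hi => by
    simp only [P, if_neg (show ¬ i < s by omega), if_neg (show i ≠ s by omega)]
  have hms : ∀ i ≤ s, m.parts s ≤ m.parts i := fun i hi => m.antitone hi
  have hstep : ∀ i, P (i + 1) ≤ P i := by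
    intro i
    rcases lt_trichotomy (i + 1) s with hi | rfl | hi
    · rw [hP_lt i (by omega), hP_lt (i + 1) hi]
      have := m.antitone (Nat.le_add_right (i + 1) 1)
      omega
    · rw [hP_eq, hP_lt i (by omega)]
      omega
    · rw [hP_gt (i + 1) hi]
      rcases (Nat.lt_succ_iff.1 hi).eq_or_lt with rfl | hi'
      · rw [hP_eq]
        omega
      · rw [hP_gt i hi']
        exact m.antitone (Nat.le_add_right i 1)
  obtain ⟨N, hN⟩ := m.fin_supp
  refine ⟨⟨P, antitone_nat_of_succ_le hstep, max N (s + 1), fun i hi => ?_⟩, ?_⟩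
  · rw [hP_gt i (by omega), hN i (by omega)]
  refine ⟨Nat.zero_le s, fun i hi => hP_gt i (by omega), fun i _ hi => ?_, ?_, ?_⟩
  · have := hms (i + 1) (by omega)
    show P i + 1 = _
    rw [hP_lt i hi]
    omega
  · show P s < _
    rw [hP_eq]
    omega
  · show P s + k = _
    rw [hP_eq]
    omega

theorem nodup_betaResidues_conj_iff_length_le_one {c : Partition} {k : ℕ} (hc : c.parts 0 < k)
    (hcore : ∀ b, ¬ IsRimHook c b k) :
    (betaResidues k (k - 1) (conj c)).Nodup ↔ length c ≤ 1 := by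
  rw [length_eq_conj_parts_zero]
  refine ⟨fun hnd => ?_, fun hle => nodup_betaResidues_of_parts_zero_le_one hle (by omega)⟩
  by_contra! hlen
  have hne : ∀ j < k - 1, beta (conj c) j ≠ beta (conj c) 0 - k := by
    intro j hj heq
    have hj0 : j = 0 := (List.nodup_map_iff_inj_on List.nodup_range).1 hnd j
      (List.mem_range.2 hj) 0 (List.mem_range.2 (by omega)) (by simp [heq])
    subst hj0
    omega
  obtain ⟨s, hlt, hle⟩ :=
    exists_last_row (by omega) (by omega) (fun j hj => conj_parts_eq_zero (by omega)) hne
  obtain ⟨b, hb⟩ := exists_isRimHookRows_zero hlt hle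
  exact hcore _ (conj_conj c ▸ isRimHook_conj hb.isRimHook)

end Cores

theorem resid_eq_resid_iff {k : ℕ} (hk : 0 < k) {x y : ℤ} :
    resid k x = resid k y ↔ (x : ZMod k) = y := by
  rw [ZMod.intCast_eq_intCast_iff']
  have := Int.emod_lt_of_pos x (by omega : (0 : ℤ) < k)
  have := Int.emod_lt_of_pos y (by omega : (0 : ℤ) < k)
  have := Int.emod_nonneg x (by omega : (k : ℤ) ≠ 0)
  have := Int.emod_nonneg y (by omega : (k : ℤ) ≠ 0)
  unfold resid
  split_ifs <;> omega

theorem gammaSeq_injOn_iff_nodup_betaResidues {k : ℕ} (hk : 0 < k) (l : Partition) :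
    (∀ i ∈ Finset.Icc 1 (k - 1), ∀ j ∈ Finset.Icc 1 (k - 1),
        gammaSeq k l i = gammaSeq k l j → i = j) ↔ (betaResidues k (k - 1) (conj l)).Nodup := by
  have hgamma : ∀ i j, gammaSeq k l (i + 1) = gammaSeq k l (j + 1) ↔
      (beta (conj l) i : ZMod k) = beta (conj l) j := fun i j => by
    rw [← resid_eq_resid_iff hk]
    simp [gammaSeq, betaSeq, beta]
  rw [betaResidues, List.nodup_map_iff_inj_on List.nodup_range]
  simp only [Finset.mem_Icc, List.mem_range]
  constructor
  · intro H i hi j hj hij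
    have := H (i + 1) (by omega) (j + 1) (by omega) ((hgamma i j).2 hij)
    omega
  · intro H i hi j hj hij
    obtain ⟨i, rfl⟩ : ∃ i', i = i' + 1 := ⟨i - 1, by omega⟩
    obtain ⟨j, rfl⟩ : ∃ j', j = j' + 1 := ⟨j - 1, by omega⟩
    rw [H i (by omega) j (by omega) ((hgamma i j).1 hij)]

theorem gamma_distinct_iff_core_small_general (k : ℕ) (l : Partition)
    (h1 : l.parts 0 < k) (c : Partition) (hc : IsCore k l c) :
    (∀ i ∈ Finset.Icc 1 (k-1), ∀ j ∈ Finset.Icc 1 (k-1),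
        gammaSeq k l i = gammaSeq k l j → i = j) ↔ length c ≤ 1 := by
  have hk : 0 < k := by omega
  rw [gammaSeq_injOn_iff_nodup_betaResidues hk,
    ← (betaResidues_conj_perm_of_reflTransGen hk hc.1 (by omega : l.parts 0 ≤ k - 1)).nodup_iff]
  exact nodup_betaResidues_conj_iff_length_le_one
    ((parts_le_of_reflTransGen hc.1 0).trans_lt h1) hc.2

/-- for `k ≥ 2` and `λ_1 < k`, the residues
`γ_1, …, γ_{k-1}` (`γ_i ≡ λᶜ_i - i (mod k)`, taken in `{1,…,k}`) are pairwise
distinct iff the `k`-core of `λ` has at most one part. -/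
theorem gamma_distinct_iff_core_small (k : ℕ) (hk : 2 ≤ k) (l : Partition)
    (h1 : l.parts 0 < k) (c : Partition) (hc : IsCore k l c) :
    (∀ i ∈ Finset.Icc 1 (k-1), ∀ j ∈ Finset.Icc 1 (k-1),
        gammaSeq k l i = gammaSeq k l j → i = j) ↔ length c ≤ 1 :=
  gamma_distinct_iff_core_small_general k l h1 c hc

end Petrie
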